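/- Let q(x_{t−1}|x_t, x_0) be the posterior of the multinomial diffusion: with forward kernels q(x_t|x_{t−1}) = Cat((1−β_t)x_{t−1} + β_t/K) and marginal q(x_{t−1}|x_0) = Cat(ᾱ_{t−1}x_0 + (1−ᾱ_{t−1})/K), Bayes' rule gives q(x_{t−1}|x_t, x_0) = Cat(π̃/Σ_i π̃_i) where π̃ = [α_t x_t + (1−α_t)/K] ⊙ [ᾱ_{t−1} x_0 + (1−ᾱ_{t−1})/K] and ⊙ denotes entrywise product. -/
import Mathlib


open Finset

/-- Bayes' rule for the multinomial diffusion posterior: with forward kernel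
`q(x_t | x_{t-1}) = Cat((1-β_t) x_{t-1} + β_t/K)` and marginal
`q(x_{t-1} | x_0) = Cat(ᾱ_{t-1} x_0 + (1-ᾱ_{t-1})/K)`, the posterior over the one-hot
value `e_k` of `x_{t-1}` is `π̃_k / ∑ π̃` where
`π̃ = [α_t x_t + (1-α_t)/K] ⊙ [ᾱ_{t-1} x_0 + (1-ᾱ_{t-1})/K]`. -/
theorem stmt_14 (K : ℕ) (hK : 1 ≤ K)
    (β αbar : ℝ) (hβ : β ∈ Set.Ioo (0 : ℝ) 1) (hαbar : αbar ∈ Set.Ioo (0 : ℝ) 1)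
    (α : ℝ) (hα : α = 1 - β)
    (xt x₀ : Fin K → ℝ) (kt k₀ : Fin K)
    (hxt : xt = fun i => if i = kt then (1 : ℝ) else 0)
    (hx₀ : x₀ = fun i => if i = k₀ then (1 : ℝ) else 0)
    (fwd marg tilde : Fin K → ℝ)
    (hfwd : ∀ k, fwd k = ∑ i, xt i * ((1 - β) * (if i = k then (1 : ℝ) else 0) + β / K))
    (hmarg : ∀ k, marg k = αbar * x₀ k + (1 - αbar) / K)
    (htilde : ∀ k, tilde k = (α * xt k + (1 - α) / K) * (αbar * x₀ k + (1 - αbar) / K)) :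
    ∀ k, fwd k * marg k / (∑ j, fwd j * marg j) = tilde k / ∑ j, tilde j := by
  have key : ∀ k, fwd k * marg k = tilde k := by
    intro k
    have hf : fwd k = α * xt k + (1 - α) / K := by
      rw [hfwd k, hxt, hα]
      rw [Finset.sum_eq_single kt]
      · simp [eq_comm]
      · intro b _ hb; simp [hb]
      · simp [eq_comm]
    rw [hf, hmarg k, htilde k]
  intro k
  simp only [key]
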